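/- arXiv:2506.10748 — 3 statements merged into one kernel-verified Lean document; each statement's English description precedes it below -/
import Mathlib

section
/- Let (P_n) and (Q_n) be sequences of probability measures on ℝ^{N_n} having finite moments of all orders, and let (D_n) be a sequence of natural-number degree bounds. If Adv_{≤D_n}(P_n, Q_n) = 1 + o(1) as n → ∞, then no sequence of real multivariate polynomials f_n in N_n variables of total degree at most D_n weakly separates (P_n) and (Q_n). -/
/-!
Weak separation gives `c > 0` with `Var_Q f_n ≤ c Δ_n²` for large `n`, where `Δ_n ≠ 0` is the
difference of the means. The affine test polynomial `g = 1 + (f_n - E_Q f_n) / (c Δ_n)` has the same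
degree bound, `E_P g = 1 + 1/c` and `E_Q g² = 1 + Var_Q f_n / (c Δ_n)² ≤ 1 + 1/c`, so
`Adv ≥ sqrt (1 + 1/c) > 1` for all large `n`, contradicting `Adv → 1`.
-/

open MeasureTheory MvPolynomial Filter Asymptotics

noncomputable section

/-- The mean of a polynomial function under a measure on `σ → ℝ`. -/
def polyMean {σ : Type} (P : Measure (σ → ℝ)) (f : MvPolynomial σ ℝ) : ℝ :=
  ∫ y, eval y f ∂P

/-- The variance of a polynomial function under a measure on `σ → ℝ`. -/
def polyVar {σ : Type} (P : Measure (σ → ℝ)) (f : MvPolynomial σ ℝ) : ℝ :=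
  ∫ y, (eval y f - polyMean P f) ^ 2 ∂P

/-- The degree-`D` advantage `Adv_{≤D}(P,Q)`. -/
def Adv {σ : Type} (P Q : Measure (σ → ℝ)) (D : ℕ) : ℝ :=
  sSup {r : ℝ | ∃ f : MvPolynomial σ ℝ, f.totalDegree ≤ D ∧
    0 < (∫ y, (eval y f) ^ 2 ∂Q) ∧
    r = (∫ y, eval y f ∂P) / Real.sqrt (∫ y, (eval y f) ^ 2 ∂Q)}

/-- A sequence of polynomials weakly separates `(P_n)`, `(Q_n)` if
`sqrt(max(Var_P f, Var_Q f)) = O(|E_P f − E_Q f|)` as `n → ∞`, with the means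
differing for all large `n`. -/
def WeaklySeparates {ι : ℕ → Type} (P Q : ∀ n, Measure (ι n → ℝ))
    (f : ∀ n, MvPolynomial (ι n) ℝ) : Prop :=
  ((fun n => Real.sqrt (max (polyVar (P n) (f n)) (polyVar (Q n) (f n)))) =O[atTop]
    fun n => |polyMean (P n) (f n) - polyMean (Q n) (f n)|) ∧
  ∀ᶠ n in atTop, polyMean (P n) (f n) ≠ polyMean (Q n) (f n)

end

section

variable {σ : Type}

lemma polyVar_nonneg (P : Measure (σ → ℝ)) (f : MvPolynomial σ ℝ) : 0 ≤ polyVar P f :=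
  integral_nonneg fun _ => sq_nonneg _

lemma totalDegree_one_add_C_mul_sub_C_le (f : MvPolynomial σ ℝ) (a m : ℝ) :
    (1 + C a * (f - C m)).totalDegree ≤ f.totalDegree := by
  refine (totalDegree_add _ _).trans (max_le (by simp) ?_)
  refine (totalDegree_mul _ _).trans ?_
  rw [totalDegree_C, zero_add]
  exact totalDegree_sub_C_le f m

lemma integral_eval_one_add_C_mul_sub_C (P : Measure (σ → ℝ)) [IsProbabilityMeasure P]
    {f : MvPolynomial σ ℝ} (hf : Integrable (fun y => eval y f) P) (a m : ℝ) :
    ∫ y, eval y (1 + C a * (f - C m)) ∂P = 1 + a * (polyMean P f - m) := by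
  have hfm : Integrable (fun y => eval y f - m) P := hf.sub (integrable_const m)
  simp only [map_add, map_one, map_mul, map_sub, eval_C]
  rw [integral_add (integrable_const 1) (hfm.const_mul a), integral_const_mul,
    integral_sub hf (integrable_const m)]
  simp [polyMean]

lemma integral_eval_one_add_C_mul_sub_polyMean_sq (Q : Measure (σ → ℝ)) [IsProbabilityMeasure Q]
    (hQmom : ∀ g : MvPolynomial σ ℝ, Integrable (fun y => eval y g) Q)
    (f : MvPolynomial σ ℝ) (a : ℝ) :
    ∫ y, eval y (1 + C a * (f - C (polyMean Q f))) ^ 2 ∂Q = 1 + a ^ 2 * polyVar Q f := by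
  set m := polyMean Q f
  have hfm : Integrable (fun y => eval y f - m) Q := (hQmom f).sub (integrable_const m)
  have hfm2 : Integrable (fun y => (eval y f - m) ^ 2) Q := by
    have h := hQmom ((f - C m) ^ 2)
    simp only [eval_pow, map_sub, eval_C] at h
    exact h
  have hexpand : ∀ y, eval y (1 + C a * (f - C m)) ^ 2
      = 1 + 2 * a * (eval y f - m) + a ^ 2 * (eval y f - m) ^ 2 := fun y => by
    simp only [map_add, map_one, map_mul, map_sub, eval_C]; ring
  have hcentered : ∫ y, (eval y f - m) ∂Q = 0 := by
    rw [integral_sub (hQmom f) (integrable_const m)]; simp [m, polyMean]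
  simp only [hexpand]
  rw [integral_add (f := fun y => 1 + 2 * a * (eval y f - m))
      ((integrable_const 1).add (hfm.const_mul _)) (hfm2.const_mul _),
    integral_add (integrable_const 1) (hfm.const_mul _), integral_const_mul, integral_const_mul,
    hcentered]
  simp [polyVar, m]

/-- `Adv` is a real `sSup`, hence `0` when the set of ratios is unbounded. -/
lemma le_Adv_or_Adv_eq_zero (P Q : Measure (σ → ℝ)) {D : ℕ} {g : MvPolynomial σ ℝ}
    (hg : g.totalDegree ≤ D) (hpos : 0 < ∫ y, eval y g ^ 2 ∂Q) :
    (∫ y, eval y g ∂P) / Real.sqrt (∫ y, eval y g ^ 2 ∂Q) ≤ Adv P Q D ∨ Adv P Q D = 0 := by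
  by_cases hbdd : BddAbove {r : ℝ | ∃ f : MvPolynomial σ ℝ, f.totalDegree ≤ D ∧
      0 < (∫ y, (eval y f) ^ 2 ∂Q) ∧
      r = (∫ y, eval y f ∂P) / Real.sqrt (∫ y, (eval y f) ^ 2 ∂Q)}
  · exact Or.inl (le_csSup hbdd ⟨g, hg, hpos, rfl⟩)
  · exact Or.inr (Real.sSup_of_not_bddAbove hbdd)

lemma sqrt_one_add_inv_le_Adv_or_Adv_eq_zero (P Q : Measure (σ → ℝ))
    [IsProbabilityMeasure P] [IsProbabilityMeasure Q]
    (hPmom : ∀ g : MvPolynomial σ ℝ, Integrable (fun y => eval y g) P)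
    (hQmom : ∀ g : MvPolynomial σ ℝ, Integrable (fun y => eval y g) Q)
    {D : ℕ} {f : MvPolynomial σ ℝ} (hf : f.totalDegree ≤ D) {c : ℝ} (hc : 0 < c)
    (hne : polyMean P f ≠ polyMean Q f)
    (hvar : polyVar Q f ≤ c * (polyMean P f - polyMean Q f) ^ 2) :
    Real.sqrt (1 + c⁻¹) ≤ Adv P Q D ∨ Adv P Q D = 0 := by
  set Δ := polyMean P f - polyMean Q f
  have hΔ : Δ ≠ 0 := sub_ne_zero.mpr hne
  set a := (c * Δ)⁻¹
  have haΔ : a * Δ = c⁻¹ := by simp only [a]; field_simp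
  set g : MvPolynomial σ ℝ := 1 + C a * (f - C (polyMean Q f))
  have hmean : ∫ y, eval y g ∂P = 1 + c⁻¹ := by
    rw [integral_eval_one_add_C_mul_sub_C P (hPmom f), haΔ]
  have hsq : ∫ y, eval y g ^ 2 ∂Q = 1 + a ^ 2 * polyVar Q f :=
    integral_eval_one_add_C_mul_sub_polyMean_sq Q hQmom f a
  have hsq_le : ∫ y, eval y g ^ 2 ∂Q ≤ 1 + c⁻¹ := by
    calc ∫ y, eval y g ^ 2 ∂Q ≤ 1 + a ^ 2 * (c * Δ ^ 2) := by rw [hsq]; gcongr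
      _ = 1 + c⁻¹ := by
        rw [show a ^ 2 * (c * Δ ^ 2) = (a * Δ) ^ 2 * c by ring, haΔ]; field_simp
  have hsq_pos : 0 < ∫ y, eval y g ^ 2 ∂Q := by
    rw [hsq]; positivity [polyVar_nonneg Q f]
  have hratio : Real.sqrt (1 + c⁻¹) ≤ (∫ y, eval y g ∂P) / Real.sqrt (∫ y, eval y g ^ 2 ∂Q) := by
    rw [hmean, le_div_iff₀ (Real.sqrt_pos.mpr hsq_pos)]
    calc Real.sqrt (1 + c⁻¹) * Real.sqrt (∫ y, eval y g ^ 2 ∂Q)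
        ≤ Real.sqrt (1 + c⁻¹) * Real.sqrt (1 + c⁻¹) := by gcongr
      _ = 1 + c⁻¹ := Real.mul_self_sqrt (by positivity)
  exact (le_Adv_or_Adv_eq_zero P Q ((totalDegree_one_add_C_mul_sub_C_le f _ _).trans hf)
    hsq_pos).imp_left hratio.trans

end

lemma WeaklySeparates.exists_polyVar_le {ι : ℕ → Type} {P Q : ∀ n, Measure (ι n → ℝ)}
    {f : ∀ n, MvPolynomial (ι n) ℝ} (h : WeaklySeparates P Q f) :
    ∃ c > 0, ∀ᶠ n in atTop, polyMean (P n) (f n) ≠ polyMean (Q n) (f n) ∧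
      polyVar (Q n) (f n) ≤ c * (polyMean (P n) (f n) - polyMean (Q n) (f n)) ^ 2 := by
  obtain ⟨C, hC, hbound⟩ := h.1.exists_pos
  refine ⟨C ^ 2, by positivity, ?_⟩
  filter_upwards [hbound.bound, h.2] with n hn hne
  rw [Real.norm_of_nonneg (Real.sqrt_nonneg _), norm_abs_eq_norm, Real.norm_eq_abs,
    Real.sqrt_le_left (by positivity)] at hn
  refine ⟨hne, ?_⟩
  calc polyVar (Q n) (f n) ≤ max (polyVar (P n) (f n)) (polyVar (Q n) (f n)) := le_max_right _ _
    _ ≤ (C * |polyMean (P n) (f n) - polyMean (Q n) (f n)|) ^ 2 := hn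
    _ = C ^ 2 * (polyMean (P n) (f n) - polyMean (Q n) (f n)) ^ 2 := by rw [mul_pow, sq_abs]

/-- If `Adv_{≤D_n}(P_n, Q_n) = 1 + o(1)` as `n → ∞`, then no sequence of
polynomials of total degree at most `D_n` weakly separates `(P_n)` and `(Q_n)`. -/
theorem statement_1 (N : ℕ → ℕ) (D : ℕ → ℕ)
    (P Q : ∀ n, Measure (Fin (N n) → ℝ))
    (hP : ∀ n, IsProbabilityMeasure (P n)) (hQ : ∀ n, IsProbabilityMeasure (Q n))
    (hPmom : ∀ n (g : MvPolynomial (Fin (N n)) ℝ), Integrable (fun y => eval y g) (P n))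
    (hQmom : ∀ n (g : MvPolynomial (Fin (N n)) ℝ), Integrable (fun y => eval y g) (Q n))
    (hAdv : (fun n => Adv (P n) (Q n) (D n) - 1) =o[atTop] fun _ => (1 : ℝ)) :
    ¬ ∃ f : ∀ n, MvPolynomial (Fin (N n)) ℝ,
        (∀ n, (f n).totalDegree ≤ D n) ∧ WeaklySeparates P Q f := by
  rintro ⟨f, hdeg, hsep⟩
  obtain ⟨c, hc, hvar⟩ := hsep.exists_polyVar_le
  have hlim : Tendsto (fun n => Adv (P n) (Q n) (D n)) atTop (nhds 1) := by
    simpa using ((isLittleO_one_iff ℝ).mp hAdv).add_const 1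
  have hgap : 1 < Real.sqrt (1 + c⁻¹) := by
    rw [Real.lt_sqrt zero_le_one]; simpa using hc
  obtain ⟨n, ⟨hne, hvar_n⟩, hlt, hpos⟩ := (hvar.and ((hlim.eventually (gt_mem_nhds hgap)).and
    (hlim.eventually (lt_mem_nhds one_pos)))).exists
  rcases sqrt_one_add_inv_le_Adv_or_Adv_eq_zero (P n) (Q n) (hPmom n) (hQmom n) (hdeg n) hc hne
    hvar_n with hle | hzero
  · exact hle.not_gt hlt
  · exact hpos.ne' hzero
end

section
/- Fix N and D, and let P and Q be probability measures on ℝ^N with finite moments of all orders. Suppose h_0, …, h_m are real multivariate polynomials in N variables of total degree at most D that form a vector-space basis of the space of all such polynomials, and that they are orthonormal with respect to Q, i.e. E_{Y∼Q}[h_i(Y) h_j(Y)] = 1 if i = j and 0 otherwise. Then Adv_{≤D}(P,Q)² = Σ_{i=0}^m ( E_{Y∼P}[h_i(Y)] )². -/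
/-!
Expanding in the `Q`-orthonormal basis, `f = ∑ cᵢ hᵢ` has `E_Q[f²] = ‖c‖²` and
`E_P[f] = ⟪c, a⟫` with `aᵢ = E_P[hᵢ]`, so the advantage is `sup_{c ≠ 0} ⟪c, a⟫ / ‖c‖ = ‖a‖`
by Cauchy–Schwarz, the supremum being attained at `c = a`.
-/

open MeasureTheory MvPolynomial Filter Asymptotics

noncomputable section

section

variable {ι : Type*} [Fintype ι]

theorem sSup_sum_mul_div_sqrt_sum_sq (a : ι → ℝ) :
    sSup {r : ℝ | ∃ c : ι → ℝ, 0 < ∑ i, c i ^ 2 ∧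
      r = (∑ i, c i * a i) / √(∑ i, c i ^ 2)} = √(∑ i, a i ^ 2) := by
  set S := {r : ℝ | ∃ c : ι → ℝ, 0 < ∑ i, c i ^ 2 ∧ r = (∑ i, c i * a i) / √(∑ i, c i ^ 2)}
  have hub : ∀ r ∈ S, r ≤ √(∑ i, a i ^ 2) := by
    rintro _ ⟨c, hc, rfl⟩
    rw [div_le_iff₀ (Real.sqrt_pos.2 hc), mul_comm]
    exact Real.sum_mul_le_sqrt_mul_sqrt _ _ _
  refine le_antisymm (Real.sSup_le hub (Real.sqrt_nonneg _)) ?_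
  rcases (Finset.sum_nonneg fun i _ => sq_nonneg (a i)).eq_or_lt with hA | hA
  · -- every ratio vanishes; for empty `ι` the set is empty and `sSup ∅ = 0`
    have ha : ∀ i, a i = 0 := fun i => by
      simpa using (Finset.sum_eq_zero_iff_of_nonneg fun j _ => sq_nonneg (a j)).1 hA.symm i
        (Finset.mem_univ i)
    rw [← hA, Real.sqrt_zero]
    refine Real.sSup_nonneg ?_
    rintro _ ⟨c, -, rfl⟩
    simp [ha]
  · refine le_csSup ⟨_, hub⟩ ⟨a, hA, ?_⟩
    simp_rw [← sq]
    exact Real.div_sqrt.symm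

variable {X : Type*} [MeasurableSpace X] {μ : Measure X} {φ : ι → X → ℝ}

theorem integral_sum_mul (hφ : ∀ i, Integrable (φ i) μ) (c : ι → ℝ) :
    ∫ x, ∑ i, c i * φ i x ∂μ = ∑ i, c i * ∫ x, φ i x ∂μ := by
  rw [integral_finsetSum _ fun i _ => (hφ i).const_mul (c i)]
  simp_rw [integral_const_mul]

theorem integral_sum_mul_sq_of_orthonormal [DecidableEq ι]
    (hφ : ∀ i j, Integrable (fun x => φ i x * φ j x) μ)
    (horth : ∀ i j, ∫ x, φ i x * φ j x ∂μ = if i = j then 1 else 0) (c : ι → ℝ) :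
    ∫ x, (∑ i, c i * φ i x) ^ 2 ∂μ = ∑ i, c i ^ 2 := by
  have hexpand : ∀ x, (∑ i, c i * φ i x) ^ 2 = ∑ i, c i * ∑ j, c j * (φ i x * φ j x) := by
    intro x
    simp_rw [sq, Finset.sum_mul_sum, Finset.mul_sum]
    exact Finset.sum_congr rfl fun i _ => Finset.sum_congr rfl fun j _ => by ring
  simp_rw [hexpand]
  rw [integral_sum_mul fun i => integrable_finsetSum _ fun j _ => (hφ i j).const_mul (c j)]
  simp_rw [integral_sum_mul (hφ _), horth, mul_ite, mul_one, mul_zero,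
    Finset.sum_ite_eq, Finset.mem_univ, if_true, sq]

end

theorem eval_sum_smul {R σ ι : Type*} [CommSemiring R] (s : Finset ι) (c : ι → R)
    (h : ι → MvPolynomial σ R) (y : σ → R) :
    eval y (∑ i ∈ s, c i • h i) = ∑ i ∈ s, c i * eval y (h i) := by
  simp [map_sum, smul_eval]

theorem Adv_eq_sSup_coefficients {σ : Type} {ι : Type*} [Fintype ι] [DecidableEq ι]
    {P Q : Measure (σ → ℝ)} {D : ℕ} {h : ι → MvPolynomial σ ℝ}
    (hP : ∀ i, Integrable (fun y => eval y (h i)) P)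
    (hQ : ∀ i j, Integrable (fun y => eval y (h i) * eval y (h j)) Q)
    (hdeg : ∀ i, (h i).totalDegree ≤ D)
    (hspan : ∀ g : MvPolynomial σ ℝ, g.totalDegree ≤ D → g ∈ Submodule.span ℝ (Set.range h))
    (horth : ∀ i j, ∫ y, eval y (h i) * eval y (h j) ∂Q = if i = j then 1 else 0) :
    Adv P Q D = sSup {r : ℝ | ∃ c : ι → ℝ, 0 < ∑ i, c i ^ 2 ∧
      r = (∑ i, c i * ∫ y, eval y (h i) ∂P) / √(∑ i, c i ^ 2)} := by
  have hmean : ∀ c : ι → ℝ,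
      ∫ y, eval y (∑ i, c i • h i) ∂P = ∑ i, c i * ∫ y, eval y (h i) ∂P := fun c => by
    simp_rw [eval_sum_smul]
    exact integral_sum_mul hP c
  have hsecond : ∀ c : ι → ℝ, ∫ y, eval y (∑ i, c i • h i) ^ 2 ∂Q = ∑ i, c i ^ 2 := fun c => by
    simp_rw [eval_sum_smul]
    exact integral_sum_mul_sq_of_orthonormal hQ horth c
  refine congrArg sSup (Set.ext fun r => ⟨?_, ?_⟩)
  · rintro ⟨f, hf, hpos, rfl⟩
    obtain ⟨c, rfl⟩ := (Submodule.mem_span_range_iff_exists_fun ℝ).1 (hspan f hf)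
    rw [hsecond] at hpos ⊢
    exact ⟨c, hpos, by rw [hmean]⟩
  · rintro ⟨c, hpos, rfl⟩
    have hdeg_sum : (∑ i, c i • h i).totalDegree ≤ D :=
      (totalDegree_finsetSum _ _).trans
        (Finset.sup_le fun i _ => (totalDegree_smul_le _ _).trans (hdeg i))
    exact ⟨∑ i, c i • h i, hdeg_sum, by rwa [hsecond], by rw [hmean, hsecond]⟩

theorem statement_2_general (N D m : ℕ) (P Q : Measure (Fin N → ℝ))
    (hPmom : ∀ g : MvPolynomial (Fin N) ℝ, Integrable (fun y => eval y g) P)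
    (hQmom : ∀ g : MvPolynomial (Fin N) ℝ, Integrable (fun y => eval y g) Q)
    (h : Fin (m + 1) → MvPolynomial (Fin N) ℝ)
    (hdeg : ∀ i, (h i).totalDegree ≤ D)
    (hspan : ∀ g : MvPolynomial (Fin N) ℝ, g.totalDegree ≤ D →
      g ∈ Submodule.span ℝ (Set.range h))
    (horth : ∀ i j, (∫ y, eval y (h i) * eval y (h j) ∂Q) = if i = j then (1 : ℝ) else 0) :
    Adv P Q D ^ 2 = ∑ i, (∫ y, eval y (h i) ∂P) ^ 2 := by
  have hQprod : ∀ i j, Integrable (fun y => eval y (h i) * eval y (h j)) Q := fun i j => by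
    simpa using hQmom (h i * h j)
  rw [Adv_eq_sSup_coefficients (fun i => hPmom (h i)) hQprod hdeg hspan horth,
    sSup_sum_mul_div_sqrt_sum_sq, Real.sq_sqrt (Finset.sum_nonneg fun i _ => sq_nonneg _)]

/-- if `h_0, …, h_m` is a basis of the space of polynomials of total degree
at most `D` that is orthonormal with respect to `Q`, then
`Adv_{≤D}(P,Q)² = Σ_i (E_P[h_i])²`. -/
theorem statement_2 (N D m : ℕ) (P Q : Measure (Fin N → ℝ))
    (hP : IsProbabilityMeasure P) (hQ : IsProbabilityMeasure Q)
    (hPmom : ∀ g : MvPolynomial (Fin N) ℝ, Integrable (fun y => eval y g) P)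
    (hQmom : ∀ g : MvPolynomial (Fin N) ℝ, Integrable (fun y => eval y g) Q)
    (h : Fin (m + 1) → MvPolynomial (Fin N) ℝ)
    (hdeg : ∀ i, (h i).totalDegree ≤ D)
    (hli : LinearIndependent ℝ h)
    (hspan : ∀ g : MvPolynomial (Fin N) ℝ, g.totalDegree ≤ D →
      g ∈ Submodule.span ℝ (Set.range h))
    (horth : ∀ i j, (∫ y, eval y (h i) * eval y (h j) ∂Q) = if i = j then (1 : ℝ) else 0) :
    Adv P Q D ^ 2 = ∑ i, (∫ y, eval y (h i) ∂P) ^ 2 :=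
  statement_2_general N D m P Q hPmom hQmom h hdeg hspan horth

end
end

section
/- Fix N and D, and let P and Q be probability measures on ℝ^N with finite moments of all orders. Assume the quadratic form f ↦ E_{Y∼Q}[f(Y)²] is positive definite on the space of real multivariate polynomials in N variables of total degree at most D (i.e., E_{Y∼Q}[f(Y)²] > 0 for every nonzero such f). Then the supremum, over polynomials f of total degree at most D satisfying E_{Y∼Q}[f(Y)] = 0 and E_{Y∼Q}[f(Y)²] > 0, of E_{Y∼P}[f(Y)] / sqrt(E_{Y∼Q}[f(Y)²]) equals sqrt(Adv_{≤D}(P,Q)² − 1). -/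
/-!
Write a polynomial of degree at most `D` as `f = g + c` with `E_Q[g] = 0`. Then
`E_P[f] = E_P[g] + c` and `E_Q[f²] = E_Q[g²] + c²`, so by Cauchy–Schwarz the ratio of `f` is at
most `√(1 + t²)`, where `t` is the ratio of `g`, with equality for the shift
`c = E_Q[g²] / E_P[g]` when `t > 0`. If `E_Q[g²] = 0`, positive definiteness forces `g = 0` and
the ratio of `f` is at most `1`. Passing to suprema gives `Adv² = 1 + (sup over centered g)²`.
-/

open MeasureTheory MvPolynomial Filter Asymptotics

noncomputable section

lemma add_div_sqrt_le_sqrt_one_add_sq (a c : ℝ) {b : ℝ} (hb : 0 < b) :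
    (a + c) / √(b ^ 2 + c ^ 2) ≤ √(1 + (a / b) ^ 2) := by
  have hden : 0 < b ^ 2 + c ^ 2 := by positivity
  rw [div_le_iff₀ (Real.sqrt_pos.mpr hden), ← Real.sqrt_mul (by positivity)]
  refine Real.le_sqrt_of_sq_le ?_
  -- Cauchy–Schwarz for the vectors `(a / b, 1)` and `(b, c)`
  have key : (1 + (a / b) ^ 2) * (b ^ 2 + c ^ 2) - (a + c) ^ 2 = (a * c / b - b) ^ 2 := by
    field_simp; ring
  linarith [sq_nonneg (a * c / b - b)]

lemma add_div_sqrt_eq_sqrt_one_add_sq {a b : ℝ} (ha : 0 < a) (hb : 0 < b) :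
    (a + b ^ 2 / a) / √(b ^ 2 + (b ^ 2 / a) ^ 2) = √(1 + (a / b) ^ 2) := by
  have hnum : 0 < a + b ^ 2 / a := by positivity
  rw [div_eq_iff (Real.sqrt_pos.mpr (by positivity)).ne', ← Real.sqrt_mul (by positivity),
    ← Real.sqrt_sq hnum.le]
  congr 1
  field_simp
  ring

lemma sSup_eq_sqrt_sSup_sq_sub_one {S T : Set ℝ} (h1 : (1 : ℝ) ∈ S)
    (hT_neg : ∀ t ∈ T, -t ∈ T)
    (hS : ∀ s ∈ S, s ≤ 1 ∨ ∃ t ∈ T, s ≤ √(1 + t ^ 2))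
    (hT : ∀ t ∈ T, 0 < t → ∃ s ∈ S, √(1 + t ^ 2) ≤ s) :
    sSup T = √(sSup S ^ 2 - 1) := by
  have hT_abs : ∀ t ∈ T, ∀ M, (∀ t ∈ T, t ≤ M) → t ^ 2 ≤ M ^ 2 := fun t ht M hM =>
    sq_le_sq' (by linarith [hM _ (hT_neg t ht)]) (hM t ht)
  by_cases hTb : BddAbove T
  · have hM0 : 0 ≤ sSup T := by
      rcases T.eq_empty_or_nonempty with rfl | ⟨t, ht⟩
      · simp
      · linarith [le_csSup hTb ht, le_csSup hTb (hT_neg t ht)]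
    have hSle : ∀ s ∈ S, s ≤ √(1 + sSup T ^ 2) := by
      intro s hs
      rcases hS s hs with hs1 | ⟨t, ht, hst⟩
      · exact hs1.trans (Real.one_le_sqrt.mpr (by nlinarith))
      · exact hst.trans (Real.sqrt_le_sqrt (by
          linarith [hT_abs t ht _ fun t ht => le_csSup hTb ht]))
    have hSb : BddAbove S := ⟨_, hSle⟩
    have hA1 : 1 ≤ sSup S := le_csSup hSb h1
    apply le_antisymm
    · refine Real.sSup_le (fun t ht => ?_) (Real.sqrt_nonneg _)
      rcases le_or_gt t 0 with ht0 | ht0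
      · exact ht0.trans (Real.sqrt_nonneg _)
      obtain ⟨s, hs, hts⟩ := hT t ht ht0
      have hA : 1 + t ^ 2 ≤ sSup S ^ 2 :=
        (Real.sqrt_le_iff.mp (hts.trans (le_csSup hSb hs))).2
      exact Real.le_sqrt_of_sq_le (by linarith)
    · have hA : sSup S ^ 2 ≤ 1 + sSup T ^ 2 :=
        (Real.le_sqrt' (by linarith)).mp (csSup_le ⟨1, h1⟩ hSle)
      calc √(sSup S ^ 2 - 1) ≤ √(sSup T ^ 2) := Real.sqrt_le_sqrt (by linarith)
        _ = sSup T := Real.sqrt_sq hM0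
  · have hSb : ¬BddAbove S := by
      rintro ⟨A, hA⟩
      refine hTb ⟨A, fun t ht => ?_⟩
      rcases le_or_gt t 0 with ht0 | ht0
      · exact ht0.trans ((zero_le_one).trans (hA h1))
      obtain ⟨s, hs, hts⟩ := hT t ht ht0
      calc t ≤ √(1 + t ^ 2) := Real.le_sqrt_of_sq_le (by linarith)
        _ ≤ A := hts.trans (hA hs)
    simp [Real.sSup_of_not_bddAbove hTb, Real.sSup_of_not_bddAbove hSb,
      Real.sqrt_eq_zero_of_nonpos]

section

variable {σ : Type} (P Q : Measure (σ → ℝ)) (D : ℕ)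

-- `Adv P Q D` is `sSup (advRatios P Q D)` by definition, and the set in `statement_3` is
-- `centeredAdvRatios P Q D`.
def advRatios : Set ℝ :=
  {r : ℝ | ∃ f : MvPolynomial σ ℝ, f.totalDegree ≤ D ∧
    0 < (∫ y, (eval y f) ^ 2 ∂Q) ∧
    r = (∫ y, eval y f ∂P) / Real.sqrt (∫ y, (eval y f) ^ 2 ∂Q)}

def centeredAdvRatios : Set ℝ :=
  {r : ℝ | ∃ g : MvPolynomial σ ℝ, g.totalDegree ≤ D ∧
    (∫ y, eval y g ∂Q) = 0 ∧ 0 < (∫ y, (eval y g) ^ 2 ∂Q) ∧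
    r = (∫ y, eval y g ∂P) / Real.sqrt (∫ y, (eval y g) ^ 2 ∂Q)}

variable {P Q D}

lemma integrable_eval_sq {μ : Measure (σ → ℝ)}
    (hmom : ∀ g : MvPolynomial σ ℝ, Integrable (fun y => eval y g) μ) (g : MvPolynomial σ ℝ) :
    Integrable (fun y => (eval y g) ^ 2) μ := by
  convert hmom (g ^ 2) using 2
  rw [map_pow]

lemma integral_eval_add_C {μ : Measure (σ → ℝ)} [IsProbabilityMeasure μ]
    {g : MvPolynomial σ ℝ} (hg : Integrable (fun y => eval y g) μ) (c : ℝ) :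
    ∫ y, eval y (g + C c) ∂μ = (∫ y, eval y g ∂μ) + c := by
  simp only [map_add, eval_C]
  rw [integral_add hg (integrable_const c), integral_const, probReal_univ, one_smul]

lemma integral_eval_add_C_sq {μ : Measure (σ → ℝ)} [IsProbabilityMeasure μ]
    (hmom : ∀ g : MvPolynomial σ ℝ, Integrable (fun y => eval y g) μ)
    {g : MvPolynomial σ ℝ} (hg : ∫ y, eval y g ∂μ = 0) (c : ℝ) :
    ∫ y, (eval y (g + C c)) ^ 2 ∂μ = (∫ y, (eval y g) ^ 2 ∂μ) + c ^ 2 := by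
  have hsq := integrable_eval_sq hmom g
  have hlin : Integrable (fun y => 2 * c * eval y g) μ := (hmom g).const_mul _
  have hsum : Integrable (fun y => (eval y g) ^ 2 + 2 * c * eval y g) μ := hsq.add hlin
  have hexp : (fun y => (eval y (g + C c)) ^ 2)
      = fun y => (eval y g) ^ 2 + 2 * c * eval y g + c ^ 2 := by
    funext y; simp only [map_add, eval_C]; ring
  rw [hexp, integral_add hsum (integrable_const _), integral_add hsq hlin, integral_const_mul, hg,
    integral_const, probReal_univ, one_smul, mul_zero, add_zero]

lemma totalDegree_add_C_le {g : MvPolynomial σ ℝ} (hg : g.totalDegree ≤ D) (c : ℝ) :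
    (g + C c).totalDegree ≤ D :=
  (totalDegree_add _ _).trans (max_le hg (by simp))

lemma one_mem_advRatios [IsProbabilityMeasure P] [IsProbabilityMeasure Q] :
    (1 : ℝ) ∈ advRatios P Q D :=
  ⟨1, by simp, by simp, by simp⟩

lemma neg_mem_centeredAdvRatios {t : ℝ} (ht : t ∈ centeredAdvRatios P Q D) :
    -t ∈ centeredAdvRatios P Q D := by
  obtain ⟨g, hgD, hg0, hgq, rfl⟩ := ht
  refine ⟨-g, by rwa [totalDegree_neg], ?_, ?_, ?_⟩ <;>
    simp only [map_neg, integral_neg, neg_sq, hg0, neg_zero, neg_div, hgq]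

lemma le_one_or_exists_centeredAdvRatios [IsProbabilityMeasure P] [IsProbabilityMeasure Q]
    (hPmom : ∀ g : MvPolynomial σ ℝ, Integrable (fun y => eval y g) P)
    (hQmom : ∀ g : MvPolynomial σ ℝ, Integrable (fun y => eval y g) Q)
    (hpd : ∀ g : MvPolynomial σ ℝ, g.totalDegree ≤ D → g ≠ 0 → 0 < ∫ y, (eval y g) ^ 2 ∂Q)
    {s : ℝ} (hs : s ∈ advRatios P Q D) :
    s ≤ 1 ∨ ∃ t ∈ centeredAdvRatios P Q D, s ≤ √(1 + t ^ 2) := by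
  obtain ⟨f, hfD, -, rfl⟩ := hs
  set c := ∫ y, eval y f ∂Q
  set g := f + C (-c)
  have hf : f = g + C c := by simp [g]
  have hgD : g.totalDegree ≤ D := totalDegree_add_C_le hfD _
  have hg0 : ∫ y, eval y g ∂Q = 0 := by rw [integral_eval_add_C (hQmom f)]; ring
  rw [hf, integral_eval_add_C (hPmom g), integral_eval_add_C_sq hQmom hg0]
  rcases eq_or_ne g 0 with hg | hg
  · left
    simp only [hg, map_zero, integral_zero, zero_add, zero_pow two_ne_zero, Real.sqrt_sq_eq_abs]
    exact div_le_one_of_le₀ (le_abs_self c) (abs_nonneg c)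
  · right
    have hgq := hpd g hgD hg
    refine ⟨_, ⟨g, hgD, hg0, hgq, rfl⟩, ?_⟩
    have := add_div_sqrt_le_sqrt_one_add_sq (∫ y, eval y g ∂P) c (Real.sqrt_pos.mpr hgq)
    rwa [Real.sq_sqrt hgq.le] at this

lemma exists_mem_advRatios_ge [IsProbabilityMeasure P] [IsProbabilityMeasure Q]
    (hPmom : ∀ g : MvPolynomial σ ℝ, Integrable (fun y => eval y g) P)
    (hQmom : ∀ g : MvPolynomial σ ℝ, Integrable (fun y => eval y g) Q)
    {t : ℝ} (ht : t ∈ centeredAdvRatios P Q D) (ht0 : 0 < t) :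
    ∃ s ∈ advRatios P Q D, √(1 + t ^ 2) ≤ s := by
  obtain ⟨g, hgD, hg0, hgq, rfl⟩ := ht
  set a := ∫ y, eval y g ∂P
  set b := √(∫ y, (eval y g) ^ 2 ∂Q)
  have hb : 0 < b := Real.sqrt_pos.mpr hgq
  have ha : 0 < a := by simpa [div_pos_iff_of_pos_right hb] using ht0
  have hq : ∫ y, (eval y g) ^ 2 ∂Q = b ^ 2 := (Real.sq_sqrt hgq.le).symm
  refine ⟨_, ⟨g + C (b ^ 2 / a), totalDegree_add_C_le hgD _, ?_, rfl⟩, ?_⟩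
  · rw [integral_eval_add_C_sq hQmom hg0]; positivity
  · rw [integral_eval_add_C (hPmom g), integral_eval_add_C_sq hQmom hg0, hq,
      add_div_sqrt_eq_sqrt_one_add_sq ha hb]

end

/-- if the quadratic form `f ↦ E_Q[f²]` is positive definite on polynomials of
total degree at most `D`, then the supremum over such polynomials that are centered under `Q`
(i.e. `E_Q[f] = 0`) of `E_P[f]/sqrt(E_Q[f²])` equals `sqrt(Adv_{≤D}(P,Q)² − 1)`. -/
theorem statement_3 (N D : ℕ) (P Q : Measure (Fin N → ℝ))
    (hP : IsProbabilityMeasure P) (hQ : IsProbabilityMeasure Q)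
    (hPmom : ∀ g : MvPolynomial (Fin N) ℝ, Integrable (fun y => eval y g) P)
    (hQmom : ∀ g : MvPolynomial (Fin N) ℝ, Integrable (fun y => eval y g) Q)
    (hpd : ∀ g : MvPolynomial (Fin N) ℝ, g.totalDegree ≤ D → g ≠ 0 →
      0 < ∫ y, (eval y g) ^ 2 ∂Q) :
    sSup {r : ℝ | ∃ g : MvPolynomial (Fin N) ℝ, g.totalDegree ≤ D ∧
        (∫ y, eval y g ∂Q) = 0 ∧ 0 < (∫ y, (eval y g) ^ 2 ∂Q) ∧
        r = (∫ y, eval y g ∂P) / Real.sqrt (∫ y, (eval y g) ^ 2 ∂Q)}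
      = Real.sqrt (Adv P Q D ^ 2 - 1) :=
  sSup_eq_sqrt_sSup_sq_sub_one one_mem_advRatios (fun _ => neg_mem_centeredAdvRatios)
    (fun _ => le_one_or_exists_centeredAdvRatios hPmom hQmom hpd)
    (fun _ => exists_mem_advRatios_ge hPmom hQmom)

end
end
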